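/- arXiv:1905.07568 — 2 statements merged into one kernel-verified Lean document; each statement's English description precedes it below -/
import Mathlib

section
/- Let z₁,…,zₙ (n ≥ 2) be complex numbers. Then for all indices j, k ∈ {1,…,n}, σ_z² ≥ |z_j − z_k|²/(2n) (a complex-number extension of Nagy's inequality). -/
/-!
Put `w i = z i - zt` and rotate by a unit `u` with `u (w j - w k) = ‖w j - w k‖`. With
`x i = Re (u w i)` we get `‖z j - z k‖ = x j - x k`, hence
`‖z j - z k‖² ≤ 2 ∑ x i²`. Since `2 (Re v)² = ‖v‖² + Re (v²)`, this sum equals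
`∑ ‖w i‖² + Re (u² ∑ w i²) ≤ ∑ ‖w i‖² + ‖∑ w i²‖`, which is `2n σ_z²`.
-/

open Complex Finset

lemma Complex.two_mul_re_sq (v : ℂ) : 2 * v.re ^ 2 = ‖v‖ ^ 2 + (v ^ 2).re := by
  rw [Complex.sq_norm, normSq_apply, sq, sq, mul_re]
  ring

lemma sq_sub_le_two_mul_sum_sq {ι : Type*} [Fintype ι] (x : ι → ℝ) (j k : ι) :
    (x j - x k) ^ 2 ≤ 2 * ∑ i, x i ^ 2 := by
  classical
  rcases eq_or_ne j k with rfl | hjk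
  · simp only [sub_self, ne_eq, OfNat.ofNat_ne_zero, not_false_eq_true, zero_pow]
    positivity
  have hpair : x j ^ 2 + x k ^ 2 ≤ ∑ i, x i ^ 2 := by
    rw [← sum_pair (f := fun i => x i ^ 2) hjk]
    exact sum_le_sum_of_subset_of_nonneg (subset_univ _) fun i _ _ => sq_nonneg (x i)
  nlinarith [sq_nonneg (x j + x k)]

lemma Complex.norm_sub_sq_le_norm_sum_sq_add_sum_norm_sq {ι : Type*} [Fintype ι] (w : ι → ℂ)
    (j k : ι) :
    ‖w j - w k‖ ^ 2 ≤ ‖∑ i, w i ^ 2‖ + ∑ i, ‖w i‖ ^ 2 := by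
  set u := exp (↑(-arg (w j - w k)) * I)
  have hu : ‖u‖ = 1 := norm_exp_ofReal_mul_I _
  have hrot : u * (w j - w k) = ‖w j - w k‖ := by
    conv_lhs => rw [← norm_mul_exp_arg_mul_I (w j - w k)]
    rw [mul_left_comm, ← exp_add, ofReal_neg, neg_mul, neg_add_cancel, exp_zero, mul_one]
  have hsum : 2 * ∑ i, (u * w i).re ^ 2 = ∑ i, ‖w i‖ ^ 2 + (u ^ 2 * ∑ i, w i ^ 2).re := by
    simp only [mul_sum, re_sum, ← sum_add_distrib, two_mul_re_sq, norm_mul, hu, one_mul,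
      mul_pow]
  have hre : (u ^ 2 * ∑ i, w i ^ 2).re ≤ ‖∑ i, w i ^ 2‖ := by
    calc (u ^ 2 * ∑ i, w i ^ 2).re ≤ ‖u ^ 2 * ∑ i, w i ^ 2‖ := re_le_norm _
      _ = ‖∑ i, w i ^ 2‖ := by rw [norm_mul, norm_pow, hu, one_pow, one_mul]
  calc ‖w j - w k‖ ^ 2 = ((u * w j).re - (u * w k).re) ^ 2 := by
        rw [← sub_re, ← mul_sub, hrot, ofReal_re]
    _ ≤ 2 * ∑ i, (u * w i).re ^ 2 := sq_sub_le_two_mul_sum_sq (fun i => (u * w i).re) j k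
    _ ≤ ‖∑ i, w i ^ 2‖ + ∑ i, ‖w i‖ ^ 2 := by linarith

theorem stmt_5_general (n : ℕ) (z : Fin n → ℂ) (zt : ℂ)
    (σ2 : ℝ)
    (hσ2 : σ2 = (‖(∑ i, (z i - zt) ^ 2) / n‖
        + (∑ i, ‖z i - zt‖ ^ 2) / n) / 2) :
    ∀ j k, ‖z j - z k‖ ^ 2 / (2 * n) ≤ σ2 := by
  intro j k
  have hn : (0 : ℝ) < n := Nat.cast_pos.mpr (Fin.pos j)
  have key := Complex.norm_sub_sq_le_norm_sum_sq_add_sum_norm_sq (fun i => z i - zt) j k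
  rw [sub_sub_sub_cancel_right] at key
  rw [hσ2, norm_div, norm_natCast, ← add_div, div_div, mul_comm (n : ℝ)]
  gcongr

/-- Complex extension of Nagy's inequality: `σ_z² ≥ |z_j - z_k|²/(2n)`. -/
theorem stmt_5 (n : ℕ) (hn : 2 ≤ n) (z : Fin n → ℂ) (zt : ℂ)
    (hzt : zt = (∑ i, z i) / n)
    (σ2 : ℝ)
    (hσ2 : σ2 = (‖(∑ i, (z i - zt) ^ 2) / n‖
        + (∑ i, ‖z i - zt‖ ^ 2) / n) / 2) :
    ∀ j k, ‖z j - z k‖ ^ 2 / (2 * n) ≤ σ2 :=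
  stmt_5_general n z zt σ2 hσ2
end

section
/- Let A be an n×n complex matrix (n ≥ 3) whose eigenvalues λ₁,…,λₙ are all real and nonnegative, and suppose 0 < tr A and (tr A)² ≤ n·tr(B²), where B = A − (tr A/n)·I. Then Spd(A)² ≤ 2·tr(B²) − (n·tr(B²) − (tr A)²)² / (n(n−2)(tr A)²); equivalently Spd(A) ≤ (1/tr A)·√(2·tr(B²)·(tr A)² − (n·tr(B²) − (tr A)²)²/(n(n−2))). -/
/-!
Let `m ≤ M` be the extreme eigenvalues, `T = ∑ λᵢ` and `S = ∑ λᵢ²`. Summing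
`(M - λᵢ)(λᵢ - m) ≥ 0` gives `S ≤ (M + m) T` (as `M m ≥ 0`), and Cauchy–Schwarz on the
`n - 2` remaining eigenvalues gives `(T - M - m)² ≤ (n - 2)(S - M² - m²)`. Since
`n tr(B²) - T² = n S - 2T² ≥ 0`, the first bound controls `(n S - 2T²)²` by
`T² (n (M + m) - 2T)²`, and the second bound is exactly the statement that this is at most
`(n - 2) T² (2 n tr(B²) - n (M - m)²)`.
-/

open Polynomial Finset

theorem Finset.sum_sub_div_card_sq {ι : Type*} (s : Finset ι) (f : ι → ℝ) :
    ∑ i ∈ s, (f i - (∑ j ∈ s, f j) / #s) ^ 2 = ∑ i ∈ s, f i ^ 2 - (∑ i ∈ s, f i) ^ 2 / #s := by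
  rcases s.eq_empty_or_nonempty with rfl | hs
  · simp
  have hcard : (#s : ℝ) ≠ 0 := by exact_mod_cast hs.card_pos.ne'
  simp only [sub_sq, sum_add_distrib, sum_sub_distrib, ← sum_mul, ← mul_sum, sum_const,
    nsmul_eq_mul]
  field_simp
  ring

theorem Finset.sum_sq_add_card_mul_le {ι : Type*} (s : Finset ι) {f : ι → ℝ} {m M : ℝ}
    (hf : ∀ i ∈ s, f i ∈ Set.Icc m M) :
    ∑ i ∈ s, f i ^ 2 + #s * (M * m) ≤ (M + m) * ∑ i ∈ s, f i := by
  have h : 0 ≤ ∑ i ∈ s, ((M + m) * f i - f i ^ 2 - M * m) := sum_nonneg fun i hi => by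
    nlinarith [mul_nonneg (sub_nonneg.2 (hf i hi).2) (sub_nonneg.2 (hf i hi).1)]
  rw [sum_sub_distrib, sum_sub_distrib, ← mul_sum, sum_const, nsmul_eq_mul] at h
  linarith

theorem Fintype.sq_sum_sub_sub_le {ι : Type*} [Fintype ι] [DecidableEq ι] (f : ι → ℝ)
    {i j : ι} (hij : i ≠ j) :
    (∑ k, f k - f i - f j) ^ 2 ≤ (Fintype.card ι - 2) * (∑ k, f k ^ 2 - f i ^ 2 - f j ^ 2) := by
  have hsub : ({i, j} : Finset ι) ⊆ univ := subset_univ _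
  have hcard : (#(univ \ {i, j}) : ℝ) = Fintype.card ι - 2 := by
    rw [card_sdiff_of_subset hsub, card_pair hij, card_univ, Nat.cast_sub]
    · norm_num
    · exact card_pair hij ▸ card_le_univ _
  have key := sq_sum_le_card_mul_sum_sq (s := univ \ {i, j}) (f := f)
  rwa [sum_sdiff_eq_sub hsub, sum_sdiff_eq_sub hsub, sum_pair hij, sum_pair hij, hcard,
    sub_add_eq_sub_sub, sub_add_eq_sub_sub] at key

theorem exists_ne_isLeast_isGreatest {ι α : Type*} [Fintype ι] [PartialOrder α]
    (hι : 1 < Fintype.card ι) {f : ι → α} {m M : α}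
    (hm : IsLeast (Set.range f) m) (hM : IsGreatest (Set.range f) M) :
    ∃ i j, i ≠ j ∧ f i = m ∧ f j = M := by
  obtain ⟨⟨i, rfl⟩, hlow⟩ := hm
  obtain ⟨⟨j, rfl⟩, hup⟩ := hM
  by_cases hij : i = j
  · subst hij
    obtain ⟨k, hk⟩ := Fintype.exists_ne_of_one_lt_card hι i
    exact ⟨i, k, hk.symm, rfl, le_antisymm (hup ⟨k, rfl⟩) (hlow ⟨k, rfl⟩)⟩
  · exact ⟨i, j, hij, rfl, rfl⟩

theorem spread_sq_le {n T S m M : ℝ} (hn : 2 < n) (hT : 0 < T) (hm : 0 ≤ m)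
    (hmM : m ≤ M) (h1 : S + n * (M * m) ≤ (M + m) * T)
    (h2 : (T - M - m) ^ 2 ≤ (n - 2) * (S - M ^ 2 - m ^ 2))
    (hcond : T ^ 2 ≤ n * (S - T ^ 2 / n)) :
    (M - m) ^ 2 ≤
      2 * (S - T ^ 2 / n) - (n * (S - T ^ 2 / n) - T ^ 2) ^ 2 / (n * (n - 2) * T ^ 2) := by
  have hn0 : n ≠ 0 := by positivity
  have hD : n * (S - T ^ 2 / n) - T ^ 2 = n * S - 2 * T ^ 2 := by field_simp; ring
  have hD0 : 0 ≤ n * S - 2 * T ^ 2 := by linarith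
  rw [hD]
  have hS : S ≤ (M + m) * T := by nlinarith [mul_nonneg (hm.trans hmM) hm]
  have hnS : n * S - 2 * T ^ 2 ≤ T * (n * (M + m) - 2 * T) := by
    nlinarith [mul_le_mul_of_nonneg_left hS (by positivity : (0 : ℝ) ≤ n)]
  have hsq : (n * S - 2 * T ^ 2) ^ 2 ≤ T ^ 2 * (n * (M + m) - 2 * T) ^ 2 := by
    rw [← mul_pow]; exact pow_le_pow_left₀ hD0 hnS 2
  -- equivalent to `n * h2`, since `2 * (M ^ 2 + m ^ 2) = (M + m) ^ 2 + (M - m) ^ 2`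
  have hCS : (n * (M + m) - 2 * T) ^ 2 ≤ (n - 2) * (2 * (n * S - T ^ 2) - n * (M - m) ^ 2) := by
    nlinarith
  rw [le_sub_iff_add_le, ← le_sub_iff_add_le', div_le_iff₀ (by positivity)]
  calc (n * S - 2 * T ^ 2) ^ 2 ≤ T ^ 2 * ((n - 2) * (2 * (n * S - T ^ 2) - n * (M - m) ^ 2)) :=
        hsq.trans (mul_le_mul_of_nonneg_left hCS (by positivity))
    _ = (2 * (S - T ^ 2 / n) - (M - m) ^ 2) * (n * (n - 2) * T ^ 2) := by field_simp

theorem stmt_16_general (n : ℕ) (hn : 3 ≤ n)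
    (lam : Fin n → ℝ)
    (hpos : ∀ i, 0 ≤ lam i)
    (T trB2 : ℝ) (hT : T = ∑ i, lam i)
    (htrB2 : trB2 = ∑ i, (lam i - T / n) ^ 2)
    (hT0 : 0 < T) (hcond : T ^ 2 ≤ (n : ℝ) * trB2)
    (lmin lmax : ℝ)
    (hmin : IsLeast (Set.range lam) lmin)
    (hmax : IsGreatest (Set.range lam) lmax) :
    (lmax - lmin) ^ 2 ≤
      2 * trB2 - ((n : ℝ) * trB2 - T ^ 2) ^ 2 / ((n : ℝ) * ((n : ℝ) - 2) * T ^ 2) := by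
  obtain ⟨i, j, hij, rfl, rfl⟩ :=
    exists_ne_isLeast_isGreatest (by rw [Fintype.card_fin]; omega) hmin hmax
  have hvar : trB2 = ∑ k, lam k ^ 2 - T ^ 2 / n := by
    rw [htrB2, hT]
    simpa using sum_sub_div_card_sq univ lam
  have hbounds : ∀ k ∈ univ, lam k ∈ Set.Icc (lam i) (lam j) :=
    fun k _ => ⟨hmin.2 ⟨k, rfl⟩, hmax.2 ⟨k, rfl⟩⟩
  have h1 := sum_sq_add_card_mul_le univ hbounds
  have h2 := Fintype.sq_sum_sub_sub_le lam hij.symm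
  rw [card_univ, Fintype.card_fin, ← hT] at h1
  rw [Fintype.card_fin, ← hT] at h2
  rw [hvar] at hcond ⊢
  exact spread_sq_le (by exact_mod_cast hn) hT0 (hpos i) (hbounds j (mem_univ j)).1 h1 h2 hcond

/-- If the eigenvalues of `A` are real and nonnegative, `tr A > 0`,
`(tr A)² ≤ n·tr B²` with `B = A - (tr A/n)I` and `n ≥ 3`, then
`Spd(A)² ≤ 2 tr B² - (n tr B² - (tr A)²)²/(n(n-2)(tr A)²)`. -/
theorem stmt_16 (n : ℕ) (hn : 3 ≤ n) (A : Matrix (Fin n) (Fin n) ℂ)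
    (lam : Fin n → ℝ)
    (hchar : Matrix.charpoly A = ∏ i, (X - C ((lam i : ℂ))))
    (hpos : ∀ i, 0 ≤ lam i)
    (T trB2 : ℝ) (hT : T = ∑ i, lam i)
    (htrB2 : trB2 = ∑ i, (lam i - T / n) ^ 2)
    (hT0 : 0 < T) (hcond : T ^ 2 ≤ (n : ℝ) * trB2)
    (lmin lmax : ℝ)
    (hmin : IsLeast (Set.range lam) lmin)
    (hmax : IsGreatest (Set.range lam) lmax) :
    (lmax - lmin) ^ 2 ≤
      2 * trB2 - ((n : ℝ) * trB2 - T ^ 2) ^ 2 / ((n : ℝ) * ((n : ℝ) - 2) * T ^ 2) :=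
  stmt_16_general n hn lam hpos T trB2 hT htrB2 hT0 hcond lmin lmax hmin hmax
end
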